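/- Let π be the insertion datum with domain S (the edges of Γ landing on the left leg, i.e., edges from vertices of S into the distinguished vertex set) arising from the unique factorization Γ = Γ₁ ∘₁^π Γ₂. Then an automorphism Φ of Γ fixes π if and only if Φ(S) ⊆ S; moreover every automorphism of Γ automatically satisfies Φ(S) ⊆ S, hence Aut(Γ, π) = Aut(Γ). -/

import Mathlib

/-! The vertices of `Γ` coming from `Γ₁` are exactly those from which the boundary vertex `c2`
can be reached: in `Γ₁` every vertex other than the sink `c1` has a path to `c2`, which never
passes through `c1`, while no edge leaves the inserted copy of `Γ₂`. Hence an automorphism,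
which fixes `c2`, preserves both parts. As the only edge from `a ∈ S` into `Γ₂` ends at `π a`,
it then maps `S` into `S` and commutes with `π`. -/

/-- An admissible graph: finite directed acyclic graph, boundary vertices are sinks,
internal vertices have exactly two outgoing edges. -/
def IsAdm {V : Type} [Fintype V] [DecidableEq V]
    (edge : V → V → Bool) (bd : Finset V) : Prop :=
  (∀ v : V, ¬ Relation.TransGen (fun a b => edge a b = true) v v) ∧
  (∀ v ∈ bd, ∀ w, edge v w = false) ∧
  (∀ v ∉ bd, (Finset.univ.filter (fun w => edge v w = true)).card = 2)

/-- The edge relation of the quotient graph `Γ/Θ`, obtained by collapsing the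
vertex set `T` of the subgraph `Θ` to a single new boundary vertex `none`. -/
def qedge {V : Type} [Fintype V] [DecidableEq V] (edge : V → V → Bool) (T : Finset V) :
    Option {v : V // v ∉ T} → Option {v : V // v ∉ T} → Bool
  | some a, some b => edge a.1 b.1
  | some a, none => decide (∃ t ∈ T, edge a.1 t = true)
  | none, _ => false

/-- The boundary of the quotient graph `Γ/Θ`: the surviving boundary vertices of `Γ`
together with the new boundary vertex `none`. -/
def qbd {V : Type} [Fintype V] [DecidableEq V] (bd T : Finset V) :
    Finset (Option {v : V // v ∉ T}) :=
  Finset.univ.filter (fun x => x = none ∨ ∃ a : {v : V // v ∉ T}, x = some a ∧ a.1 ∈ bd)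

/-- The edge relation of the graph obtained by inserting the graph `Γ₂` (edges `e₂`) at
the boundary vertex `c1` of the graph `Γ₁` (edges `e₁`), redirecting each edge of `Γ₁`
entering `c1` according to the insertion datum `π`. -/
def edgeIns {V₁ V₂ : Type} [DecidableEq V₂]
    (e₁ : V₁ → V₁ → Bool) (e₂ : V₂ → V₂ → Bool) (c1 : V₁)
    (π : {a : V₁ // e₁ a c1 = true} → V₂) :
    ({v : V₁ // v ≠ c1} ⊕ V₂) → ({v : V₁ // v ≠ c1} ⊕ V₂) → Bool
  | .inl a, .inl b => e₁ a.1 b.1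
  | .inl a, .inr w => if h : e₁ a.1 c1 = true then decide (π ⟨a.1, h⟩ = w) else false
  | .inr w, .inr x => e₂ w x
  | .inr _, .inl _ => false

/-- The automorphism group of a graph with two ordered boundary vertices `x, y`:
edge-preserving permutations of the vertices fixing the boundary. -/
def AutG {V : Type} (edge : V → V → Bool) (x y : V) : Type :=
  {φ : V ≃ V // (∀ a b, edge (φ a) (φ b) = edge a b) ∧ φ x = x ∧ φ y = y}

/-- Two insertion data `π, π'` for the pair `(Γ₁, Γ₂)` have the same type: the resulting
graphs `Γ_{π'}` and `Γ_π` are isomorphic (by an isomorphism respecting the three ordered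
boundary vertices of the result). -/
def SameType {V₁ V₂ : Type} [DecidableEq V₂]
    (e₁ : V₁ → V₁ → Bool) (e₂ : V₂ → V₂ → Bool) (c1 c2 : V₁) (hc : c1 ≠ c2) (d1 d2 : V₂)
    (π' π : {a : V₁ // e₁ a c1 = true} → V₂) : Prop :=
  ∃ φ : ({v : V₁ // v ≠ c1} ⊕ V₂) ≃ ({v : V₁ // v ≠ c1} ⊕ V₂),
    (∀ u v, edgeIns e₁ e₂ c1 π' (φ u) (φ v) = edgeIns e₁ e₂ c1 π u v) ∧
    φ (.inr d1) = .inr d1 ∧ φ (.inr d2) = .inr d2 ∧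
    φ (.inl ⟨c2, Ne.symm hc⟩) = .inl ⟨c2, Ne.symm hc⟩

/-- The group `Aut(Γ_π, π)` of automorphisms of the resulting graph `Γ_π` which fix the
insertion datum `π`: they preserve the inserted copy of `Γ₂` and commute with `π`. -/
def AutFix {V₁ V₂ : Type} [DecidableEq V₂]
    (e₁ : V₁ → V₁ → Bool) (e₂ : V₂ → V₂ → Bool) (c1 c2 : V₁) (hc : c1 ≠ c2) (d1 d2 : V₂)
    (π : {a : V₁ // e₁ a c1 = true} → V₂) : Type :=
  {φ : ({v : V₁ // v ≠ c1} ⊕ V₂) ≃ ({v : V₁ // v ≠ c1} ⊕ V₂) //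
    (∀ u v, edgeIns e₁ e₂ c1 π (φ u) (φ v) = edgeIns e₁ e₂ c1 π u v) ∧
    φ (.inr d1) = .inr d1 ∧ φ (.inr d2) = .inr d2 ∧
    φ (.inl ⟨c2, Ne.symm hc⟩) = .inl ⟨c2, Ne.symm hc⟩ ∧
    (∀ w : V₂, ∃ x : V₂, φ (.inr w) = .inr x) ∧
    (∀ (a b : {v : V₁ // v ≠ c1}) (ha : e₁ a.1 c1 = true) (hb : e₁ b.1 c1 = true),
      φ (.inl a) = .inl b → φ (.inr (π ⟨a.1, ha⟩)) = .inr (π ⟨b.1, hb⟩))}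

open Relation

theorem Equiv.reflTransGen_apply_iff {α β : Type*} {r : α → α → Prop} {s : β → β → Prop}
    (φ : α ≃ β) (hφ : ∀ a b, s (φ a) (φ b) ↔ r a b) {a b : α} :
    ReflTransGen s (φ a) (φ b) ↔ ReflTransGen r a b := by
  refine ⟨fun h => ?_, fun h => h.lift φ fun a b => (hφ a b).2⟩
  simpa [Function.onFun] using h.lift φ.symm fun a b hab => (hφ _ _).1 (by simpa using hab)

namespace IsAdm

variable {V : Type} [Fintype V] [DecidableEq V] {edge : V → V → Bool}

theorem exists_edge_ne {bd : Finset V} (h : IsAdm edge bd) {v : V} (hv : v ∉ bd) (u : V) :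
    ∃ w, edge v w = true ∧ w ≠ u := by
  obtain ⟨w, hw, hwu⟩ := Finset.exists_mem_ne (by rw [h.2.2 v hv]; norm_num) u
  exact ⟨w, (Finset.mem_filter.1 hw).2, hwu⟩

/-- Walking along out-edges that avoid `c1` must stop, by acyclicity, and can only stop at the
other sink `c2`. -/
theorem reflTransGen_of_ne {c1 c2 : V} (h : IsAdm edge {c1, c2}) {a : V} (ha : a ≠ c1) :
    ReflTransGen (edge · · = true) a c2 := by
  let r : V → V → Prop := fun x y => TransGen (edge · · = true) y x
  have : IsTrans V r := ⟨fun _ _ _ hxy hyz => hyz.trans hxy⟩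
  have : Std.Irrefl r := ⟨h.1⟩
  induction a using (Finite.wellFounded_of_trans_of_irrefl r).induction with
  | _ a ih =>
    by_cases ha2 : a = c2
    · exact ha2 ▸ .refl
    obtain ⟨b, hab, hb⟩ := h.exists_edge_ne (v := a) (by simp [ha, ha2]) c1
    exact .head hab (ih b (.single hab) hb)

end IsAdm

section edgeIns

variable {V₁ V₂ : Type} [DecidableEq V₂] {e₁ : V₁ → V₁ → Bool} {e₂ : V₂ → V₂ → Bool} {c1 : V₁}
  {π : {a : V₁ // e₁ a c1 = true} → V₂}

theorem edgeIns_inl_inr_eq_true_iff {a : {v : V₁ // v ≠ c1}} {w : V₂} :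
    edgeIns e₁ e₂ c1 π (.inl a) (.inr w) = true ↔ ∃ h : e₁ a.1 c1 = true, π ⟨a.1, h⟩ = w := by
  by_cases h : e₁ a.1 c1 = true <;> simp [edgeIns, h]

theorem edgeIns_reflTransGen_inl (hsink : ∀ w, e₁ c1 w = false) {a b : V₁}
    (hab : ReflTransGen (e₁ · · = true) a b) (ha : a ≠ c1) (hb : b ≠ c1) :
    ReflTransGen (edgeIns e₁ e₂ c1 π · · = true) (.inl ⟨a, ha⟩) (.inl ⟨b, hb⟩) := by
  induction hab using ReflTransGen.head_induction_on with
  | refl => exact .refl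
  | @head a c hac hcb ih =>
    have hc : c ≠ c1 := by
      rintro rfl
      rcases hcb.cases_head with rfl | ⟨w, hw, -⟩
      · exact hb rfl
      · simp [hsink] at hw
    exact .head (show edgeIns e₁ e₂ c1 π (.inl ⟨a, ha⟩) (.inl ⟨c, hc⟩) = true from hac) (ih hc)

theorem edgeIns_reflTransGen_inr {w : V₂} {u : {v : V₁ // v ≠ c1} ⊕ V₂}
    (h : ReflTransGen (edgeIns e₁ e₂ c1 π · · = true) (.inr w) u) : u.isRight := by
  induction h with
  | refl => rfl
  | @tail u v _ huv ih =>
    rcases u with _ | _ <;> rcases v with _ | _ <;> simp_all [edgeIns]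

theorem edgeIns_reflTransGen_iff_isLeft [Fintype V₁] [DecidableEq V₁] {c2 : V₁}
    (h₁ : IsAdm e₁ {c1, c2}) (hc : c1 ≠ c2) (u : {v : V₁ // v ≠ c1} ⊕ V₂) :
    ReflTransGen (edgeIns e₁ e₂ c1 π · · = true) u (.inl ⟨c2, hc.symm⟩) ↔ u.isLeft := by
  rcases u with ⟨a, ha⟩ | w
  · exact iff_of_true (edgeIns_reflTransGen_inl (h₁.2.1 c1 (Finset.mem_insert_self _ _))
      (h₁.reflTransGen_of_ne ha) ha hc.symm) rfl
  · exact iff_of_false (fun h => by simpa using edgeIns_reflTransGen_inr h) (by simp)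

theorem isLeft_apply_iff_of_edgeIns [Fintype V₁] [DecidableEq V₁] {c2 : V₁}
    (h₁ : IsAdm e₁ {c1, c2}) (hc : c1 ≠ c2)
    {φ : ({v : V₁ // v ≠ c1} ⊕ V₂) ≃ ({v : V₁ // v ≠ c1} ⊕ V₂)}
    (hφ : ∀ u v, edgeIns e₁ e₂ c1 π (φ u) (φ v) = edgeIns e₁ e₂ c1 π u v)
    (hc2 : φ (.inl ⟨c2, hc.symm⟩) = .inl ⟨c2, hc.symm⟩) (u : {v : V₁ // v ≠ c1} ⊕ V₂) :
    (φ u).isLeft ↔ u.isLeft := by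
  rw [← edgeIns_reflTransGen_iff_isLeft h₁ hc, ← hc2,
    φ.reflTransGen_apply_iff fun a b => by rw [hφ], edgeIns_reflTransGen_iff_isLeft h₁ hc]

theorem exists_pi_eq_of_apply_inl {φ : ({v : V₁ // v ≠ c1} ⊕ V₂) ≃ ({v : V₁ // v ≠ c1} ⊕ V₂)}
    (hφ : ∀ u v, edgeIns e₁ e₂ c1 π (φ u) (φ v) = edgeIns e₁ e₂ c1 π u v)
    {a b : {v : V₁ // v ≠ c1}} (ha : e₁ a.1 c1 = true) (hab : φ (.inl a) = .inl b) {x : V₂}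
    (hx : φ (.inr (π ⟨a.1, ha⟩)) = .inr x) :
    ∃ hb : e₁ b.1 c1 = true, π ⟨b.1, hb⟩ = x := by
  rw [← edgeIns_inl_inr_eq_true_iff, ← hab, ← hx, hφ, edgeIns_inl_inr_eq_true_iff]
  exact ⟨ha, rfl⟩

end edgeIns

theorem stmt_10_general {V₁ V₂ : Type}
    [Fintype V₁] [DecidableEq V₁] [DecidableEq V₂]
    (e₁ : V₁ → V₁ → Bool) (c1 c2 : V₁) (hc : c1 ≠ c2) (h₁ : IsAdm e₁ {c1, c2})
    (e₂ : V₂ → V₂ → Bool) (d1 d2 : V₂)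
    (π : {a : V₁ // e₁ a c1 = true} → V₂) :
    -- `IsAut φ`: φ is an automorphism of the graph Γ_π fixing its three boundary vertices
    let IsAut : (({v : V₁ // v ≠ c1} ⊕ V₂) ≃ ({v : V₁ // v ≠ c1} ⊕ V₂)) → Prop :=
      fun φ =>
        (∀ u v, edgeIns e₁ e₂ c1 π (φ u) (φ v) = edgeIns e₁ e₂ c1 π u v) ∧
        φ (.inr d1) = .inr d1 ∧ φ (.inr d2) = .inr d2 ∧
        φ (.inl ⟨c2, Ne.symm hc⟩) = .inl ⟨c2, Ne.symm hc⟩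
    -- `MapsS φ`: φ maps the domain S of π into itself (and preserves the copy of Γ₂)
    let MapsS : (({v : V₁ // v ≠ c1} ⊕ V₂) ≃ ({v : V₁ // v ≠ c1} ⊕ V₂)) → Prop :=
      fun φ =>
        (∀ w : V₂, ∃ x : V₂, φ (.inr w) = .inr x) ∧
        (∀ a : {v : V₁ // v ≠ c1}, e₁ a.1 c1 = true →
          ∃ b : {v : V₁ // v ≠ c1}, e₁ b.1 c1 = true ∧ φ (.inl a) = .inl b)
    -- `FixesPi φ`: φ fixes the insertion datum π
    let FixesPi : (({v : V₁ // v ≠ c1} ⊕ V₂) ≃ ({v : V₁ // v ≠ c1} ⊕ V₂)) → Prop :=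
      fun φ =>
        (∀ w : V₂, ∃ x : V₂, φ (.inr w) = .inr x) ∧
        (∀ (a b : {v : V₁ // v ≠ c1}) (ha : e₁ a.1 c1 = true) (hb : e₁ b.1 c1 = true),
          φ (.inl a) = .inl b → φ (.inr (π ⟨a.1, ha⟩)) = .inr (π ⟨b.1, hb⟩))
    (∀ φ, IsAut φ → (FixesPi φ ↔ MapsS φ)) ∧
    (∀ φ, IsAut φ → MapsS φ) ∧
    {φ | IsAut φ ∧ FixesPi φ} = {φ | IsAut φ} := by
  intro IsAut MapsS FixesPi
  have mapsS : ∀ φ, IsAut φ → MapsS φ := by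
    rintro φ ⟨hφ, -, -, hc2⟩
    have side := isLeft_apply_iff_of_edgeIns h₁ hc hφ hc2
    have apply_inr (w : V₂) : ∃ x, φ (.inr w) = .inr x :=
      Sum.isRight_iff.1 (by simpa using side (.inr w))
    refine ⟨apply_inr, fun a ha => ?_⟩
    obtain ⟨b, hb⟩ := Sum.isLeft_iff.1 ((side (.inl a)).2 rfl)
    obtain ⟨x, hx⟩ := apply_inr (π ⟨a.1, ha⟩)
    exact ⟨b, (exists_pi_eq_of_apply_inl hφ ha hb hx).1, hb⟩
  have fixesPi : ∀ φ, IsAut φ → FixesPi φ := by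
    intro φ hφ
    refine ⟨(mapsS φ hφ).1, fun a b ha hb hab => ?_⟩
    obtain ⟨x, hx⟩ := (mapsS φ hφ).1 (π ⟨a.1, ha⟩)
    obtain ⟨_, hbx⟩ := exists_pi_eq_of_apply_inl hφ.1 ha hab hx
    rw [hx, ← hbx]
  exact ⟨fun φ hφ => iff_of_true (fixesPi φ hφ) (mapsS φ hφ), mapsS,
    Set.ext fun φ => and_iff_left_of_imp (fixesPi φ)⟩

/-- Let `Γ = Γ₁ ∘₁^π Γ₂` be the left extension of admissible two-boundary
graphs `Γ₁` (boundary `c1,c2`) and `Γ₂` (boundary `d1,d2`) determined by the insertion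
datum `π`, and let `S` be the domain of `π` (the vertices of `Γ₁` with an edge into `c1`).
Then an automorphism `φ` of `Γ` (also preserving the inserted copy of `Γ₂`) fixes `π` if
and only if it maps `S` into `S`; moreover every automorphism of `Γ` automatically
preserves the copy of `Γ₂` and maps `S` into `S`, hence fixes `π`:
`Aut(Γ, π) = Aut(Γ)`. -/
theorem stmt_10 {V₁ V₂ : Type}
    [Fintype V₁] [DecidableEq V₁] [Fintype V₂] [DecidableEq V₂]
    (e₁ : V₁ → V₁ → Bool) (c1 c2 : V₁) (hc : c1 ≠ c2) (h₁ : IsAdm e₁ {c1, c2})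
    (e₂ : V₂ → V₂ → Bool) (d1 d2 : V₂) (hd : d1 ≠ d2) (h₂ : IsAdm e₂ {d1, d2})
    (π : {a : V₁ // e₁ a c1 = true} → V₂) :
    -- `IsAut φ`: φ is an automorphism of the graph Γ_π fixing its three boundary vertices
    let IsAut : (({v : V₁ // v ≠ c1} ⊕ V₂) ≃ ({v : V₁ // v ≠ c1} ⊕ V₂)) → Prop :=
      fun φ =>
        (∀ u v, edgeIns e₁ e₂ c1 π (φ u) (φ v) = edgeIns e₁ e₂ c1 π u v) ∧
        φ (.inr d1) = .inr d1 ∧ φ (.inr d2) = .inr d2 ∧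
        φ (.inl ⟨c2, Ne.symm hc⟩) = .inl ⟨c2, Ne.symm hc⟩
    -- `MapsS φ`: φ maps the domain S of π into itself (and preserves the copy of Γ₂)
    let MapsS : (({v : V₁ // v ≠ c1} ⊕ V₂) ≃ ({v : V₁ // v ≠ c1} ⊕ V₂)) → Prop :=
      fun φ =>
        (∀ w : V₂, ∃ x : V₂, φ (.inr w) = .inr x) ∧
        (∀ a : {v : V₁ // v ≠ c1}, e₁ a.1 c1 = true →
          ∃ b : {v : V₁ // v ≠ c1}, e₁ b.1 c1 = true ∧ φ (.inl a) = .inl b)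
    -- `FixesPi φ`: φ fixes the insertion datum π
    let FixesPi : (({v : V₁ // v ≠ c1} ⊕ V₂) ≃ ({v : V₁ // v ≠ c1} ⊕ V₂)) → Prop :=
      fun φ =>
        (∀ w : V₂, ∃ x : V₂, φ (.inr w) = .inr x) ∧
        (∀ (a b : {v : V₁ // v ≠ c1}) (ha : e₁ a.1 c1 = true) (hb : e₁ b.1 c1 = true),
          φ (.inl a) = .inl b → φ (.inr (π ⟨a.1, ha⟩)) = .inr (π ⟨b.1, hb⟩))
    (∀ φ, IsAut φ → (FixesPi φ ↔ MapsS φ)) ∧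
    (∀ φ, IsAut φ → MapsS φ) ∧
    {φ | IsAut φ ∧ FixesPi φ} = {φ | IsAut φ} :=
  stmt_10_general e₁ c1 c2 hc h₁ e₂ d1 d2 π
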